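/- arXiv:0906.3051 — 3 statements merged into one kernel-verified Lean document; each statement's English description precedes it below -/
import Mathlib

section
/- The class of semilinear subsets of ℕ^n is closed under intersection. -/
/-- A subset of a commutative monoid (e.g. ℕ^n) is *linear* if it is of the form
`{α₀ + a₁•α₁ + ⋯ + a_m•α_m : a₁,…,a_m ∈ ℕ}`. -/
def IsLinearSet' {M : Type*} [AddCommMonoid M] (P : Set M) : Prop :=
  ∃ (m : ℕ) (α₀ : M) (α : Fin m → M),
    P = {β | ∃ a : Fin m → ℕ, β = α₀ + ∑ i, a i • α i}

/-- A set is *semilinear* if it is a finite union of linear sets. -/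
def IsSemilinearSet' {M : Type*} [AddCommMonoid M] (P : Set M) : Prop :=
  ∃ (k : ℕ) (L : Fin k → Set M), (∀ i, IsLinearSet' (L i)) ∧ P = ⋃ i, L i

/-!
`IsLinearSet'` and `IsSemilinearSet'` are Mathlib's `IsLinearSet` and `IsSemilinearSet` in
disguise: `{α₀ + ∑ aᵢ • αᵢ}` is the coset `α₀ +ᵥ closure (range α)` of a finitely generated
submonoid, and a finite union indexed by `Fin k` is the union of a finite family of sets.
Closure under intersection is then `IsSemilinearSet.inter`, whose proof goes through the
semilinearity of the solution sets of linear equations `u + F x = v + G x` over `ℕ`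
(minimal solutions plus the Hilbert basis of the homogeneous solutions, both finite by Dickson's
lemma).
-/

open Set Pointwise

variable {M : Type*} [AddCommMonoid M]

theorem setOf_add_sum_smul_eq_vadd_closure_range {m : ℕ} (α₀ : M) (α : Fin m → M) :
    {β | ∃ a : Fin m → ℕ, β = α₀ + ∑ i, a i • α i} =
      α₀ +ᵥ (AddSubmonoid.closure (range α) : Set M) := by
  ext β
  simp [mem_vadd_set, AddSubmonoid.mem_closure_range_iff_of_fintype, eq_comm]

theorem isLinearSet'_iff_isLinearSet {P : Set M} : IsLinearSet' P ↔ IsLinearSet P := by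
  constructor
  · rintro ⟨m, α₀, α, rfl⟩
    exact ⟨α₀, range α, finite_range α, setOf_add_sum_smul_eq_vadd_closure_range α₀ α⟩
  · rintro ⟨α₀, t, ht, rfl⟩
    obtain ⟨m, α, rfl⟩ := ht.fin_embedding
    exact ⟨m, α₀, α, (setOf_add_sum_smul_eq_vadd_closure_range α₀ α).symm⟩

theorem isSemilinearSet'_iff_isSemilinearSet {P : Set M} :
    IsSemilinearSet' P ↔ IsSemilinearSet P := by
  constructor
  · rintro ⟨k, L, hL, rfl⟩
    exact ⟨range L, finite_range L,
      forall_mem_range.2 fun i => isLinearSet'_iff_isLinearSet.1 (hL i), (sUnion_range L).symm⟩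
  · rintro ⟨S, hS, hS', rfl⟩
    obtain ⟨k, L, rfl⟩ := hS.fin_embedding
    exact ⟨k, L, fun i => isLinearSet'_iff_isLinearSet.2 (hS' _ (mem_range_self i)),
      sUnion_range L⟩

theorem IsSemilinearSet'.inter {P Q : Set M} (hP : IsSemilinearSet' P)
    (hQ : IsSemilinearSet' Q) : IsSemilinearSet' (P ∩ Q) := by
  rw [isSemilinearSet'_iff_isSemilinearSet] at *
  exact hP.inter hQ

/-- The class of semilinear subsets of ℕ^n is closed under intersection. -/
theorem semilinear_inter {n : ℕ} (P Q : Set (Fin n → ℕ))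
    (hP : IsSemilinearSet' P) (hQ : IsSemilinearSet' Q) :
    IsSemilinearSet' (P ∩ Q) :=
  hP.inter hQ
end

section
/- Every semilinear subset of ℕ^n is the Parikh image of a regular language, and hence membership in a semilinear set (given by its presentation) is decidable. -/
/-- The Parikh vector of a word over an `n`-letter alphabet: the count of each letter. -/
def parikh {n : ℕ} (w : List (Fin n)) : Fin n → ℕ := fun i => w.count i

/-! Parikh's map sends concatenation of languages to addition of sets and the Kleene star to the
generated submonoid. Hence a linear set `{α₀ + ∑ aᵢ αᵢ}` is the Parikh image of `u · {v₁, …, v_m}∗`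
for any words `u`, `vᵢ` with Parikh vectors `α₀`, `αᵢ`. This language is recognised by an NFA whose
states are the suffixes of `u` and of the `vᵢ`, and a semilinear set is the Parikh image of a
finite union of such regular languages. -/

open scoped Computability Pointwise

namespace NFA

variable {α σ : Type*} {M : NFA α σ}

theorem mem_acceptsFrom_iff_exists {S : Set σ} {x : List α} :
    x ∈ M.acceptsFrom S ↔ ∃ s ∈ S, x ∈ M.acceptsFrom {s} := by
  simp only [mem_acceptsFrom, mem_evalFrom_iff_exists (S := S)]
  grind

end NFA

namespace Language

variable {α : Type*}

theorem cons_mem_kstar_iff {l : Language α} {a : α} {x : List α} :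
    a :: x ∈ l∗ ↔ ∃ y z, a :: y ∈ l ∧ z ∈ l∗ ∧ x = y ++ z := by
  constructor
  · rw [mem_kstar_iff_exists_nonempty]
    rintro ⟨_ | ⟨_ | ⟨b, y⟩, bs⟩, hx, hbs⟩
    · simp at hx
    · exact absurd rfl (hbs [] List.mem_cons_self).2
    · obtain ⟨rfl, rfl⟩ : a = b ∧ x = y ++ bs.flatten := by simpa using hx
      exact ⟨y, bs.flatten, (hbs _ List.mem_cons_self).1,
        join_mem_kstar fun z hz => (hbs z (List.mem_cons_of_mem _ hz)).1, rfl⟩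
  · rintro ⟨y, _, hy, ⟨bs, rfl, hbs⟩, rfl⟩
    exact ⟨(a :: y) :: bs, rfl, List.forall_mem_cons.2 ⟨hy, hbs⟩⟩

theorem isRegular_zero : (0 : Language α).IsRegular :=
  ⟨Unit, inferInstance, ⟨fun _ _ => (), (), ∅⟩, by ext; simp [DFA.mem_accepts]⟩

theorem isRegular_iSup {ι : Type*} [Finite ι] {L : ι → Language α}
    (hL : ∀ i, (L i).IsRegular) : (⨆ i, L i).IsRegular := by
  cases nonempty_fintype ι
  rw [← Finset.sup_univ_eq_iSup]
  exact Finset.sup_induction isRegular_zero (fun _ h₁ _ h₂ => h₁.add h₂) fun i _ => hL i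

variable {u : List α} {S : Language α}

variable (u S) in
def blockStates : Set (List α) :=
  {l | l <:+ u ∨ ∃ s ∈ S, l <:+ s}

variable (u) in
theorem finite_blockStates (hS : Set.Finite S) : (blockStates u S).Finite := by
  have hsuff (s : List α) : {l | l <:+ s}.Finite :=
    s.tails.finite_toSet.subset fun _ => (List.mem_tails _ _).2
  exact (hsuff u).union (hS.biUnion fun s _ => hsuff s) |>.subset
    fun _ hl => hl.imp id fun ⟨s, hs, h⟩ => Set.mem_biUnion hs h

theorem mem_blockStates_of_cons {a : α} {l : List α} (h : a :: l ∈ blockStates u S) :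
    l ∈ blockStates u S :=
  h.imp (List.suffix_cons a l).trans fun ⟨s, hs, h⟩ => ⟨s, hs, (List.suffix_cons a l).trans h⟩

theorem mem_blockStates_of_cons_mem {a : α} {l : List α} (h : a :: l ∈ S) :
    l ∈ blockStates u S :=
  Or.inr ⟨a :: l, h, List.suffix_cons a l⟩

variable (u S) in
/-- A state is the part of the current block still to be read. -/
def blockNFA : NFA α (blockStates u S) where
  step q a := {p | q.1 = a :: p.1 ∨ q.1 = [] ∧ a :: p.1 ∈ S}
  start := {⟨u, Or.inl (List.suffix_refl u)⟩}
  accept := {q | q.1 = []}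

theorem mem_acceptsFrom_blockNFA {q : blockStates u S} {x : List α} :
    x ∈ (blockNFA u S).acceptsFrom {q} ↔ ∃ y ∈ S∗, q.1 ++ y = x := by
  induction x generalizing q with
  | nil =>
    simp only [NFA.nil_mem_acceptsFrom, Set.mem_singleton_iff, exists_eq_left,
      List.append_eq_nil_iff]
    exact ⟨fun h => ⟨[], nil_mem_kstar S, h, rfl⟩, fun ⟨_, _, h, _⟩ => h⟩
  | cons a x ih =>
    rw [NFA.cons_mem_acceptsFrom, NFA.stepSet_singleton, NFA.mem_acceptsFrom_iff_exists]
    simp only [ih]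
    obtain ⟨_ | ⟨b, l⟩, hq⟩ := q
    · simp only [blockNFA, List.nil_eq, reduceCtorEq, true_and, false_or, Set.mem_ofPred_eq,
        Subtype.exists, exists_and_left, exists_prop, List.nil_append, exists_eq_right]
      rw [cons_mem_kstar_iff]
      constructor
      · rintro ⟨y, hy, -, z, hz, rfl⟩
        exact ⟨y, z, hy, hz, rfl⟩
      · rintro ⟨y, z, hy, hz, rfl⟩
        exact ⟨y, hy, mem_blockStates_of_cons_mem hy, z, hz, rfl⟩
    · simp only [blockNFA, List.cons.injEq, reduceCtorEq, false_and, or_false,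
        Set.mem_ofPred_eq, Subtype.exists, exists_and_left, exists_prop, ↓existsAndEq, and_true,
        List.cons_append]
      exact ⟨fun ⟨h, _, y, hy, hx⟩ => ⟨y, hy, h, hx⟩,
        fun ⟨y, hy, h, hx⟩ => ⟨h, mem_blockStates_of_cons hq, y, hy, hx⟩⟩

theorem accepts_blockNFA : (blockNFA u S).accepts = {u} * S∗ := by
  ext x
  refine mem_acceptsFrom_blockNFA.trans ⟨fun ⟨y, hy, hx⟩ => ⟨u, rfl, y, hy, hx⟩, ?_⟩
  rintro ⟨_, rfl, y, hy, hx⟩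
  exact ⟨y, hy, hx⟩

variable (u) in
theorem isRegular_singleton_mul_kstar (hS : Set.Finite S) : ({u} * S∗ : Language α).IsRegular :=
  have : Finite (blockStates u S) := (finite_blockStates u hS).to_subtype
  isRegular_iff.2 ⟨_, Fintype.ofFinite _, (blockNFA u S).toDFA,
    by rw [NFA.toDFA_correct, accepts_blockNFA]⟩

end Language

section Parikh

variable {n : ℕ}

theorem parikh_append (u v : List (Fin n)) : parikh (u ++ v) = parikh u + parikh v :=
  funext fun _ => List.count_append ..

theorem parikh_flatten (L : List (List (Fin n))) : parikh L.flatten = (L.map parikh).sum := by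
  induction L with
  | nil => rfl
  | cons b L ih => rw [List.flatten_cons, parikh_append, ih, List.map_cons, List.sum_cons]

def word (x : Fin n → ℕ) : List (Fin n) :=
  (List.ofFn fun i => List.replicate (x i) i).flatten

theorem parikh_word (x : Fin n → ℕ) : parikh (word x) = x := by
  funext i
  simp [parikh, word, List.count_flatten, List.sum_ofFn, Function.comp, List.count_replicate]

theorem image_parikh_mul (K L : Language (Fin n)) :
    parikh '' (K * L : Language (Fin n)) = parikh '' K + parikh '' L :=
  Set.image_image2_distrib parikh_append

theorem image_parikh_kstar (L : Language (Fin n)) :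
    parikh '' (L∗ : Language (Fin n)) = AddSubmonoid.closure (parikh '' L) := by
  apply subset_antisymm
  · rintro _ ⟨_, ⟨bs, rfl, hbs⟩, rfl⟩
    rw [parikh_flatten]
    exact list_sum_mem fun _ hx =>
      let ⟨b, hb, hx⟩ := List.mem_map.1 hx
      AddSubmonoid.subset_closure ⟨b, hbs b hb, hx⟩
  · intro x hx
    induction hx using AddSubmonoid.closure_induction with
    | mem x hx =>
      obtain ⟨b, hb, rfl⟩ := hx
      exact ⟨b, ⟨[b], List.flatten_singleton.symm, List.forall_mem_singleton.2 hb⟩, rfl⟩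
    | zero => exact ⟨[], Language.nil_mem_kstar L, rfl⟩
    | add x y _ _ hx hy =>
      obtain ⟨a, ha, rfl⟩ := hx
      obtain ⟨b, hb, rfl⟩ := hy
      exact ⟨a ++ b, kstar_mul_kstar L ▸ Language.append_mem_mul ha hb, parikh_append a b⟩

theorem image_parikh_word_mul_kstar {ι : Type*} [Fintype ι] (x : Fin n → ℕ)
    (y : ι → Fin n → ℕ) :
    parikh '' ({word x} * (⨆ i, {word (y i)})∗ : Language (Fin n)) =
      {β | ∃ a : ι → ℕ, β = x + ∑ i, a i • y i} := by
  have hbase : parikh '' ({word x} : Language (Fin n)) = {x} :=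
    Set.image_singleton.trans (congrArg _ (parikh_word x))
  have hperiods : parikh '' (⨆ i, {word (y i)} : Language (Fin n)) = Set.range y := by
    ext β
    constructor
    · rintro ⟨w, hw, rfl⟩
      obtain ⟨i, rfl⟩ := Language.mem_iSup.1 hw
      exact ⟨i, (parikh_word _).symm⟩
    · rintro ⟨i, rfl⟩
      exact ⟨word (y i), Language.mem_iSup.2 ⟨i, rfl⟩, parikh_word _⟩
  rw [image_parikh_mul, image_parikh_kstar, hbase, hperiods, Set.singleton_add]
  ext β
  simp [AddSubmonoid.mem_closure_range_iff_of_fintype, eq_comm]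

end Parikh

/-- Every semilinear subset of ℕ^n is the Parikh image of a regular language (one accepted
by a DFA with finitely many states), and hence membership in a semilinear set is decidable. -/
theorem semilinear_is_parikh_image_of_regular {n : ℕ} (P : Set (Fin n → ℕ))
    (hP : IsSemilinearSet' P) :
    (∃ (σ : Type) (_ : Fintype σ) (M : DFA (Fin n) σ),
        {v | ∃ w ∈ M.accepts, parikh w = v} = P) ∧
      ∃ f : (Fin n → ℕ) → Bool, ∀ v, f v = true ↔ v ∈ P := by
  obtain ⟨k, L, hL, rfl⟩ := hP
  choose m base period hL using hL
  let lang (j : Fin k) : Language (Fin n) := {word (base j)} * (⨆ i, {word (period j i)})∗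
  obtain ⟨σ, hσ, M, hM⟩ : (⨆ j, lang j).IsRegular :=
    Language.isRegular_iSup fun j => Language.isRegular_singleton_mul_kstar _
      (Set.finite_iUnion fun i => Set.finite_singleton _)
  refine ⟨⟨σ, hσ, M, ?_⟩, ?_⟩
  · change parikh '' M.accepts = _
    rw [hM]
    exact Set.image_iUnion.trans
      (Set.iUnion_congr fun j => (image_parikh_word_mul_kstar _ _).trans (hL j).symm)
  · classical
    exact ⟨fun v => decide (v ∈ ⋃ j, L j), fun v => decide_eq_true_iff⟩
end

section
/- If a class of automata has a decidable word (membership) problem and an effectively enumerable set of descriptors, and there exists a minimization algorithm producing, from any automaton of the class, an equivalent automaton of the same class with a minimal number of states, and additionally equivalence of minimal automata is decidable up to renaming of states (finitely many automata with a given number of states over a given alphabet), then the emptiness problem for the class is decidable. Consequently, if emptiness is not semi-decidable for the class, no such minimization algorithm exists. -/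
/-!
Language-equivalent automata have minimizations with the same number of states, namely the
minimal one. Hence `A` accepts the same language as a fixed `A₀` exactly when `minimize A`
lies in the set of automata with that many states accepting this language, a finite set once
each state count admits only finitely many automata. Membership in a finite set is decidable,
and this set may be hard-wired into the decision procedure; emptiness is the case `A₀ = e₀`.
-/

lemma PrimrecPred.mem_list {α : Type*} [Primcodable α] [DecidableEq α] (l : List α) :
    PrimrecPred (· ∈ l) :=
  (Primrec.nat_lt.comp (Primrec.list_idxOf.comp .id (.const l)) (.const l.length)).of_eq
    fun _ => List.idxOf_lt_length_iff

lemma ComputablePred.of_finite {α : Type*} [Primcodable α] {p : α → Prop}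
    (hp : {a | p a}.Finite) : ComputablePred p := by
  classical
  exact (PrimrecPred.mem_list hp.toFinset.toList).computablePred.of_eq fun _ => by simp

lemma ComputablePred.comp {α β : Type*} [Primcodable α] [Primcodable β] {p : β → Prop}
    {f : α → β} (hp : ComputablePred p) (hf : Computable f) : ComputablePred fun a => p (f a) :=
  let ⟨_, hp⟩ := hp
  ⟨fun a => inferInstanceAs (Decidable (p (f a))), hp.comp hf⟩

section Minimization

variable {α β : Type*} {eval : α → β → Bool} {states : α → ℕ} {minimize : α → α}

lemma states_minimize_eq_of_equiv (hminEquiv : ∀ A w, eval (minimize A) w = eval A w)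
    (hminMinimal : ∀ A B, (∀ w, eval B w = eval A w) → states (minimize A) ≤ states B)
    {A B : α} (hAB : ∀ w, eval A w = eval B w) : states (minimize A) = states (minimize B) :=
  le_antisymm
    (hminMinimal A (minimize B) fun w => (hminEquiv B w).trans (hAB w).symm)
    (hminMinimal B (minimize A) fun w => (hminEquiv A w).trans (hAB w))

lemma equiv_iff_minimize_mem (hminEquiv : ∀ A w, eval (minimize A) w = eval A w)
    (hminMinimal : ∀ A B, (∀ w, eval B w = eval A w) → states (minimize A) ≤ states B)
    (A₀ A : α) :
    (∀ w, eval A w = eval A₀ w) ↔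
      minimize A ∈ {B | states B = states (minimize A₀) ∧ ∀ w, eval B w = eval A₀ w} :=
  ⟨fun h => ⟨states_minimize_eq_of_equiv hminEquiv hminMinimal h,
      fun w => (hminEquiv A w).trans (h w)⟩,
    fun h w => (hminEquiv A w).symm.trans (h.2 w)⟩

lemma computablePred_equiv [Primcodable α] (hfin : ∀ n, {A | states A = n}.Finite)
    (hmin : Computable minimize) (hminEquiv : ∀ A w, eval (minimize A) w = eval A w)
    (hminMinimal : ∀ A B, (∀ w, eval B w = eval A w) → states (minimize A) ≤ states B)
    (A₀ : α) : ComputablePred fun A => ∀ w, eval A w = eval A₀ w :=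
  ((ComputablePred.of_finite ((hfin _).subset fun _ hB => hB.1)).comp hmin).of_eq
    fun A => (equiv_iff_minimize_mem hminEquiv hminMinimal A₀ A).symm

end Minimization

theorem minimization_gives_decidable_emptiness_general
    (eval : ℕ → ℕ → Bool)
    (states : ℕ → ℕ)
    (enum : ℕ → List ℕ)
    (henumspec : ∀ A : ℕ, A ∈ enum (states A))
    (e₀ : ℕ) (he₀ : ∀ w, eval e₀ w = false)
    (minimize : ℕ → ℕ) (hmin : Computable minimize)
    (hminEquiv : ∀ A w, eval (minimize A) w = eval A w)
    (hminMinimal : ∀ A B : ℕ, (∀ w, eval B w = eval A w) →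
      states (minimize A) ≤ states B) :
    ComputablePred (fun A : ℕ => {w : ℕ | eval A w = true} = ∅) := by
  have hfin : ∀ n, {A | states A = n}.Finite := fun n =>
    (enum n).finite_toSet.subset fun A hA => hA ▸ henumspec A
  exact (computablePred_equiv hfin hmin hminEquiv hminMinimal e₀).of_eq fun A => by
    simp [Set.eq_empty_iff_forall_notMem, he₀]

/-- If a class of automata (coded as natural numbers) has a decidable word problem
(`eval`), effectively listable finitely many automata per state count (`enum`), an
automaton accepting the empty language, a computable minimization algorithm producing
equivalent automata with minimal state count, and decidable equivalence of minimal
automata, then its emptiness problem is decidable.  (Consequently, for classes whose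
emptiness problem is not semi-decidable, no such minimization algorithm can exist.) -/
theorem minimization_gives_decidable_emptiness
    (eval : ℕ → ℕ → Bool) (heval : Computable₂ eval)
    (states : ℕ → ℕ) (hstates : Computable states)
    (enum : ℕ → List ℕ) (henum : Computable enum)
    (henumspec : ∀ A : ℕ, A ∈ enum (states A))
    (e₀ : ℕ) (he₀ : ∀ w, eval e₀ w = false)
    (minimize : ℕ → ℕ) (hmin : Computable minimize)
    (hminEquiv : ∀ A w, eval (minimize A) w = eval A w)
    (hminMinimal : ∀ A B : ℕ, (∀ w, eval B w = eval A w) →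
      states (minimize A) ≤ states B)
    (eqd : ℕ → ℕ → Bool) (heqd : Computable₂ eqd)
    (heqdspec : ∀ A B : ℕ, minimize A = A → minimize B = B →
      (eqd A B = true ↔ ∀ w, eval A w = eval B w)) :
    ComputablePred (fun A : ℕ => {w : ℕ | eval A w = true} = ∅) :=
  minimization_gives_decidable_emptiness_general eval states enum henumspec e₀ he₀ minimize hmin
    hminEquiv hminMinimal
end
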